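/- arXiv:astro-ph/0008239 — 4 statements merged into one kernel-verified Lean document; each statement's English description precedes it below -/
import Mathlib

section
/- Let R be a p×p Hermitian positive definite complex matrix and a a nonzero vector in ℂ^p. Then for every w ∈ ℂ^p with wᴴ a = 1 one has wᴴ R w ≥ 1/(aᴴ R⁻¹ a), and equality holds for the MVDR beamformer w₀ = R⁻¹ a / (aᴴ R⁻¹ a) (which satisfies w₀ᴴ a = 1). In particular the minimum output power of the distortionless beamformer is 1/(aᴴ R⁻¹ a). -/
/-!
Put `c = aᴴ R⁻¹ a > 0` and `w₀ = c⁻¹ R⁻¹ a`, so that `R w₀ = c⁻¹ a`. For every distortionless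
`w` (`wᴴ a = 1`) this gives `wᴴ R w₀ = c⁻¹ = w₀ᴴ R w₀`, i.e. `w - w₀` is `R`-orthogonal to `w₀`,
and Pythagoras in the `R`-inner product yields `wᴴ R w = c⁻¹ + (w - w₀)ᴴ R (w - w₀) ≥ c⁻¹`.
-/

open Matrix
open scoped ComplexOrder

variable {n : Type*} [Fintype n]

namespace Matrix.IsHermitian

variable {α : Type*} [CommRing α] [StarRing α] {R : Matrix n n α}

lemma star_dotProduct_mulVec (hR : R.IsHermitian) (v w : n → α) :
    star (star v ⬝ᵥ (R *ᵥ w)) = star w ⬝ᵥ (R *ᵥ v) := by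
  rw [← star_dotProduct, star_mulVec, ← dotProduct_mulVec, hR.eq]

lemma dotProduct_mulVec_sub_of_orthogonal (hR : R.IsHermitian) {v w : n → α}
    (h : star w ⬝ᵥ (R *ᵥ v) = star v ⬝ᵥ (R *ᵥ v)) :
    star (w - v) ⬝ᵥ (R *ᵥ (w - v)) = star w ⬝ᵥ (R *ᵥ w) - star v ⬝ᵥ (R *ᵥ v) := by
  have h' : star v ⬝ᵥ (R *ᵥ w) = star v ⬝ᵥ (R *ᵥ v) := by
    rw [← hR.star_dotProduct_mulVec w v, h, hR.star_dotProduct_mulVec]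
  simp only [star_sub, mulVec_sub, sub_dotProduct, dotProduct_sub, h, h']
  ring

end Matrix.IsHermitian

section MVDR

variable [DecidableEq n] {𝕜 : Type*}

noncomputable def mvdrWeight [Field 𝕜] [StarRing 𝕜] (R : Matrix n n 𝕜) (a : n → 𝕜) : n → 𝕜 :=
  (star a ⬝ᵥ (R⁻¹ *ᵥ a))⁻¹ • (R⁻¹ *ᵥ a)

lemma mulVec_mvdrWeight [Field 𝕜] [StarRing 𝕜] {R : Matrix n n 𝕜} (hR : IsUnit R.det)
    (a : n → 𝕜) : R *ᵥ mvdrWeight R a = (star a ⬝ᵥ (R⁻¹ *ᵥ a))⁻¹ • a := by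
  rw [mvdrWeight, mulVec_smul, mulVec_mulVec, mul_nonsing_inv R hR, one_mulVec]

namespace Matrix.PosDef

variable [RCLike 𝕜] {R : Matrix n n 𝕜} (hR : R.PosDef) {a : n → 𝕜} (ha : a ≠ 0)
include hR ha

lemma star_mvdrWeight_dotProduct : star (mvdrWeight R a) ⬝ᵥ a = 1 := by
  have hc : 0 < star a ⬝ᵥ (R⁻¹ *ᵥ a) := hR.inv.dotProduct_mulVec_pos ha
  have hc_star : star (star a ⬝ᵥ (R⁻¹ *ᵥ a)) = star a ⬝ᵥ (R⁻¹ *ᵥ a) :=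
    IsSelfAdjoint.of_nonneg hc.le
  rw [mvdrWeight, star_smul, smul_dotProduct, star_dotProduct (R⁻¹ *ᵥ a) a, star_inv₀,
    hc_star, smul_eq_mul, inv_mul_cancel₀ hc.ne']

lemma mvdrWeight_dotProduct_mulVec :
    star (mvdrWeight R a) ⬝ᵥ (R *ᵥ mvdrWeight R a) = (star a ⬝ᵥ (R⁻¹ *ᵥ a))⁻¹ := by
  rw [mulVec_mvdrWeight ((isUnit_iff_isUnit_det R).mp hR.isUnit), dotProduct_smul,
    hR.star_mvdrWeight_dotProduct ha, smul_eq_mul, mul_one]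

lemma inv_le_dotProduct_mulVec_of_dotProduct_eq_one {w : n → 𝕜} (hw : star w ⬝ᵥ a = 1) :
    (star a ⬝ᵥ (R⁻¹ *ᵥ a))⁻¹ ≤ star w ⬝ᵥ (R *ᵥ w) := by
  have h_orth : star w ⬝ᵥ (R *ᵥ mvdrWeight R a) =
      star (mvdrWeight R a) ⬝ᵥ (R *ᵥ mvdrWeight R a) := by
    rw [hR.mvdrWeight_dotProduct_mulVec ha,
      mulVec_mvdrWeight ((isUnit_iff_isUnit_det R).mp hR.isUnit), dotProduct_smul, hw,
      smul_eq_mul, mul_one]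
  have h_nonneg := hR.posSemidef.dotProduct_mulVec_nonneg (w - mvdrWeight R a)
  rwa [hR.isHermitian.dotProduct_mulVec_sub_of_orthogonal h_orth,
    hR.mvdrWeight_dotProduct_mulVec ha, sub_nonneg] at h_nonneg

end Matrix.PosDef

end MVDR

/-- MVDR: for Hermitian positive definite `R` and `a ≠ 0`, every beamformer `w` with
`wᴴ a = 1` has output power `wᴴ R w ≥ 1/(aᴴ R⁻¹ a)`, with equality for the MVDR
beamformer `w₀ = R⁻¹ a / (aᴴ R⁻¹ a)`, which is distortionless (`w₀ᴴ a = 1`). -/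
theorem stmt8 (p : ℕ) (R : Matrix (Fin p) (Fin p) ℂ) (hR : R.PosDef)
    (a : Fin p → ℂ) (ha : a ≠ 0) :
    (∀ w : Fin p → ℂ, star w ⬝ᵥ a = 1 →
        (star a ⬝ᵥ (R⁻¹ *ᵥ a))⁻¹ ≤ star w ⬝ᵥ (R *ᵥ w))
    ∧ star ((star a ⬝ᵥ (R⁻¹ *ᵥ a))⁻¹ • (R⁻¹ *ᵥ a)) ⬝ᵥ a = 1
    ∧ star ((star a ⬝ᵥ (R⁻¹ *ᵥ a))⁻¹ • (R⁻¹ *ᵥ a)) ⬝ᵥ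
        (R *ᵥ ((star a ⬝ᵥ (R⁻¹ *ᵥ a))⁻¹ • (R⁻¹ *ᵥ a)))
      = (star a ⬝ᵥ (R⁻¹ *ᵥ a))⁻¹ :=
  ⟨fun _ hw => hR.inv_le_dotProduct_mulVec_of_dotProduct_eq_one ha hw,
    hR.star_mvdrWeight_dotProduct ha, hR.mvdrWeight_dotProduct_mulVec ha⟩
end

section
/- Let X be a p×p Hermitian complex matrix whose largest eigenvalue λ₁ is nonnegative, and let v₁ be a unit eigenvector of X for λ₁. Then g₀ = √λ₁ · v₁ minimizes ‖X − g gᴴ‖_F over all vectors g ∈ ℂ^p: for every g ∈ ℂ^p, ‖X − g gᴴ‖_F ≥ ‖X − λ₁ v₁ v₁ᴴ‖_F. That is, the best Hermitian rank-one (of the form g gᴴ) approximation of X in Frobenius norm is λ₁ v₁ v₁ᴴ. -/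
/-!
Expanding the Frobenius norm, `‖X - c w wᴴ‖² = ‖X‖² - 2c·Re(wᴴXw) + c²‖w‖⁴`. Since `λ₁` bounds every
eigenvalue, `λ₁ I - X` is positive semidefinite, so `Re(gᴴXg) ≤ λ₁ ‖g‖²`. With `t = ‖g‖²` this gives
`‖X - g gᴴ‖² ≥ ‖X‖² - 2λ₁t + t² = ‖X‖² - λ₁² + (t - λ₁)² ≥ ‖X‖² - λ₁² = ‖X - λ₁ v₁ v₁ᴴ‖²`.
-/

open Matrix
open scoped ComplexOrder

namespace Matrix

variable {n 𝕜 : Type*} [Fintype n] [RCLike 𝕜]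

lemma re_star_dotProduct_self (x : n → 𝕜) : RCLike.re (star x ⬝ᵥ x) = ∑ i, ‖x i‖ ^ 2 := by
  simp only [dotProduct, Pi.star_apply, RCLike.star_def, RCLike.conj_mul, map_sum]
  norm_cast

lemma IsHermitian.posSemidef_smul_one_sub [DecidableEq n] {A : Matrix n n 𝕜} (hA : A.IsHermitian)
    {c : ℝ} (hc : ∀ (μ : ℝ) (x : n → 𝕜), x ≠ 0 → A *ᵥ x = (μ : 𝕜) • x → μ ≤ c) :
    ((c : 𝕜) • 1 - A).PosSemidef := by
  have hY : ((c : 𝕜) • 1 - A).IsHermitian :=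
    (isHermitian_one.smul (RCLike.conj_ofReal c)).sub hA
  rw [hY.posSemidef_iff_eigenvalues_nonneg]
  intro i
  set u := (hY.eigenvectorBasis i).ofLp
  have hu : ((c : 𝕜) • 1 - A) *ᵥ u = (hY.eigenvalues i : 𝕜) • u := by
    rw [hY.mulVec_eigenvectorBasis i, RCLike.real_smul_eq_coe_smul (K := 𝕜)]
  have hAu : A *ᵥ u = ((c - hY.eigenvalues i : ℝ) : 𝕜) • u := by
    rw [sub_mulVec, smul_mulVec, one_mulVec, sub_eq_iff_eq_add] at hu
    rw [RCLike.ofReal_sub, sub_smul, hu, add_sub_cancel_left]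
  have hu0 : u ≠ 0 := fun h =>
    (hY.eigenvectorBasis.orthonormal.ne_zero i) (by simpa [u] using congrArg (WithLp.toLp 2) h)
  simpa using hc _ u hu0 hAu

lemma IsHermitian.re_dotProduct_mulVec_le {A : Matrix n n 𝕜} (hA : A.IsHermitian)
    {c : ℝ} (hc : ∀ (μ : ℝ) (x : n → 𝕜), x ≠ 0 → A *ᵥ x = (μ : 𝕜) • x → μ ≤ c) (x : n → 𝕜) :
    RCLike.re (star x ⬝ᵥ A *ᵥ x) ≤ c * RCLike.re (star x ⬝ᵥ x) := by
  classical
  have hpsd := (hA.posSemidef_smul_one_sub hc).re_dotProduct_nonneg x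
  rw [sub_mulVec, smul_mulVec, one_mulVec, dotProduct_sub, dotProduct_smul, map_sub,
    smul_eq_mul, RCLike.re_ofReal_mul] at hpsd
  linarith

lemma IsHermitian.sum_norm_sq_sub_smul_vecMulVec {X : Matrix n n 𝕜} (hX : X.IsHermitian)
    (c : ℝ) (w : n → 𝕜) :
    ∑ i, ∑ j, ‖(X - (c : 𝕜) • vecMulVec w (star w)) i j‖ ^ 2
      = ∑ i, ∑ j, ‖X i j‖ ^ 2 - 2 * c * RCLike.re (star w ⬝ᵥ X *ᵥ w)
        + c ^ 2 * (∑ i, ‖w i‖ ^ 2) ^ 2 := by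
  have hcross : star w ⬝ᵥ X *ᵥ w = ∑ i, ∑ j, star (X i j) * (w i * star (w j)) := by
    simp only [dotProduct, mulVec, Finset.mul_sum, Pi.star_apply, hX.apply]
    rw [Finset.sum_comm]
    exact Finset.sum_congr rfl fun _ _ => Finset.sum_congr rfl fun _ _ => by ring
  have hsq : ∀ i j, ‖(c : 𝕜) * (w i * star (w j))‖ ^ 2 = c ^ 2 * (‖w i‖ ^ 2 * ‖w j‖ ^ 2) := by
    intro i j
    rw [norm_mul, norm_mul, norm_star, RCLike.norm_ofReal, mul_pow, mul_pow, sq_abs]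
  simp only [sub_apply, smul_apply, vecMulVec_apply, smul_eq_mul, Pi.star_apply,
    @norm_sub_sq 𝕜 𝕜, hsq, RCLike.inner_apply, Finset.sum_add_distrib, Finset.sum_sub_distrib]
  rw [hcross, sq (∑ i, _), Finset.sum_mul_sum, Finset.mul_sum, map_sum, Finset.mul_sum]
  congr 2
  · refine Finset.sum_congr rfl fun i _ => ?_
    rw [map_sum, Finset.mul_sum]
    refine Finset.sum_congr rfl fun j _ => ?_
    rw [mul_assoc, RCLike.re_ofReal_mul, mul_comm _ (starRingEnd 𝕜 _), RCLike.star_def]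
    ring
  · simp only [Finset.mul_sum]

end Matrix

theorem stmt10_general (p : ℕ) (X : Matrix (Fin p) (Fin p) ℂ) (hX : X.IsHermitian)
    (l1 : ℝ) (v1 : Fin p → ℂ)
    (hv1 : star v1 ⬝ᵥ v1 = 1) (hEig : X *ᵥ v1 = (l1 : ℂ) • v1)
    (hMax : ∀ (μ : ℝ) (x : Fin p → ℂ), x ≠ 0 → X *ᵥ x = (μ : ℂ) • x → μ ≤ l1)
    (g : Fin p → ℂ) :
    Real.sqrt (∑ i, ∑ j, ‖(X - (l1 : ℂ) • vecMulVec v1 (star v1)) i j‖ ^ 2)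
      ≤ Real.sqrt (∑ i, ∑ j, ‖(X - vecMulVec g (star g)) i j‖ ^ 2) := by
  have hv1_norm : ∑ i, ‖v1 i‖ ^ 2 = 1 := by
    rw [← re_star_dotProduct_self, hv1, RCLike.one_re]
  have hv1_rayleigh : RCLike.re (star v1 ⬝ᵥ X *ᵥ v1) = l1 := by
    rw [hEig, dotProduct_smul, hv1, smul_eq_mul, mul_one]
    exact Complex.ofReal_re l1
  have hg_rayleigh := hX.re_dotProduct_mulVec_le hMax g
  rw [re_star_dotProduct_self] at hg_rayleigh
  have hv1_dist := hX.sum_norm_sq_sub_smul_vecMulVec l1 v1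
  have hg_dist := hX.sum_norm_sq_sub_smul_vecMulVec 1 g
  simp only [RCLike.ofReal_eq_complex_ofReal, Complex.ofReal_one, one_smul] at hv1_dist hg_dist
  refine Real.sqrt_le_sqrt ?_
  rw [hv1_dist, hg_dist, hv1_norm, hv1_rayleigh]
  nlinarith [sq_nonneg (∑ i, ‖g i‖ ^ 2 - l1)]

/-- If `X` is Hermitian with largest eigenvalue `λ₁ ≥ 0` and unit eigenvector `v₁`, then
`λ₁ v₁ v₁ᴴ` is the best approximation of `X` in Frobenius norm among all matrices of the
form `g gᴴ`. -/
theorem stmt10 (p : ℕ) (X : Matrix (Fin p) (Fin p) ℂ) (hX : X.IsHermitian)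
    (l1 : ℝ) (hl1 : 0 ≤ l1) (v1 : Fin p → ℂ)
    (hv1 : star v1 ⬝ᵥ v1 = 1) (hEig : X *ᵥ v1 = (l1 : ℂ) • v1)
    (hMax : ∀ (μ : ℝ) (x : Fin p → ℂ), x ≠ 0 → X *ᵥ x = (μ : ℂ) • x → μ ≤ l1)
    (g : Fin p → ℂ) :
    Real.sqrt (∑ i, ∑ j, ‖(X - (l1 : ℂ) • vecMulVec v1 (star v1)) i j‖ ^ 2)
      ≤ Real.sqrt (∑ i, ∑ j, ‖(X - vecMulVec g (star g)) i j‖ ^ 2) :=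
  stmt10_general p X hX l1 v1 hv1 hEig hMax g
end

section
/- Let C be a p×p Hermitian positive definite complex matrix, let R̂ be a p×p complex matrix, let a ∈ ℂ^p be nonzero, and let λ ≥ 0 be real. Set α = aᴴ C⁻¹ a (a positive real) and β = aᴴ C⁻¹ R̂ C⁻¹ a, and R = λ a aᴴ + C. Then R is Hermitian positive definite and log det(R) + tr(R⁻¹ R̂) = log det(C) + tr(C⁻¹ R̂) + log(1 + λα) − λβ/(1 + λα). Hence, up to terms independent of (λ, a), the negative log-likelihood contribution of one covariance matrix reduces to log(1 + λα) − λβ/(1 + λα). -/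
/-!
`R` is a rank-one update of `C`. The matrix determinant lemma gives `det R = det C * (1 + λα)`,
and the Sherman–Morrison formula `R⁻¹ = C⁻¹ - λ/(1 + λα) • C⁻¹ a aᴴ C⁻¹` turns `tr(R⁻¹ R̂)` into
`tr(C⁻¹ R̂) - λβ/(1 + λα)`. Since `C` and `C⁻¹` are positive definite, `det C` and `α` are
positive reals, so the logarithm of `det R` splits.
-/

open Matrix
open scoped ComplexOrder

namespace Matrix

variable {n K : Type*} [Fintype n] [DecidableEq n]

theorem det_add_vecMulVec [CommRing K] {A : Matrix n n K} (hA : IsUnit A.det) (u v : n → K) :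
    (A + vecMulVec u v).det = A.det * (1 + v ⬝ᵥ A⁻¹ *ᵥ u) := by
  rw [vecMulVec_eq Unit, det_add_replicateCol_mul_replicateRow hA, Matrix.mul_assoc,
    ← replicateCol_mulVec, det_unique (n := Unit), add_apply, one_apply_eq,
    replicateRow_mul_replicateCol_apply]

theorem inv_add_vecMulVec [Field K] {A : Matrix n n K} (hA : IsUnit A.det) (u v : n → K)
    (h : 1 + v ⬝ᵥ A⁻¹ *ᵥ u ≠ 0) :
    (A + vecMulVec u v)⁻¹
      = A⁻¹ - (1 + v ⬝ᵥ A⁻¹ *ᵥ u)⁻¹ • vecMulVec (A⁻¹ *ᵥ u) (v ᵥ* A⁻¹) := by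
  refine inv_eq_right_inv ?_
  set W := vecMulVec u (v ᵥ* A⁻¹)
  have hW : vecMulVec u v * vecMulVec (A⁻¹ *ᵥ u) (v ᵥ* A⁻¹) = (v ⬝ᵥ A⁻¹ *ᵥ u) • W := by
    rw [vecMulVec_mul_vecMulVec, vecMulVec_smul]
  have hc := inv_mul_cancel₀ h
  rw [add_mul, mul_sub, mul_sub, mul_nonsing_inv _ hA, Matrix.mul_smul, Matrix.mul_smul, hW,
    mul_vecMulVec, mulVec_mulVec, mul_nonsing_inv _ hA, one_mulVec, vecMulVec_mul]
  linear_combination (norm := module) (-hc) • W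

theorem trace_inv_add_vecMulVec_mul [Field K] {A : Matrix n n K} (hA : IsUnit A.det)
    (u v : n → K) (h : 1 + v ⬝ᵥ A⁻¹ *ᵥ u ≠ 0) (M : Matrix n n K) :
    ((A + vecMulVec u v)⁻¹ * M).trace
      = (A⁻¹ * M).trace - v ⬝ᵥ (A⁻¹ * M * A⁻¹) *ᵥ u / (1 + v ⬝ᵥ A⁻¹ *ᵥ u) := by
  have hβ : A⁻¹ *ᵥ u ⬝ᵥ (v ᵥ* A⁻¹ ᵥ* M) = v ⬝ᵥ (A⁻¹ * M * A⁻¹) *ᵥ u := by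
    rw [dotProduct_comm, dotProduct_mulVec, vecMul_vecMul, vecMul_vecMul, ← dotProduct_mulVec,
      Matrix.mul_assoc]
  rw [inv_add_vecMulVec hA u v h, Matrix.sub_mul, trace_sub, Matrix.smul_mul, trace_smul,
    vecMulVec_mul, trace_vecMulVec, hβ, smul_eq_mul, div_eq_inv_mul]

end Matrix

/-- For `R = λ a aᴴ + C` with `C` Hermitian positive definite, `a ≠ 0` and `λ ≥ 0`:
`R` is Hermitian positive definite, and
`log det R + tr(R⁻¹ R̂) = log det C + tr(C⁻¹ R̂) + log(1 + λα) − λβ/(1 + λα)`,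
where `α = aᴴ C⁻¹ a` and `β = aᴴ C⁻¹ R̂ C⁻¹ a`. -/
theorem stmt13 (p : ℕ) (C : Matrix (Fin p) (Fin p) ℂ) (hC : C.PosDef)
    (Rh : Matrix (Fin p) (Fin p) ℂ) (a : Fin p → ℂ) (ha : a ≠ 0)
    (l : ℝ) (hl : 0 ≤ l)
    (R : Matrix (Fin p) (Fin p) ℂ) (hR : R = (l : ℂ) • vecMulVec a (star a) + C) :
    R.PosDef
    ∧ (Real.log R.det.re : ℂ) + (R⁻¹ * Rh).trace
      = (Real.log C.det.re : ℂ) + (C⁻¹ * Rh).trace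
        + (Real.log (1 + l * (star a ⬝ᵥ (C⁻¹ *ᵥ a)).re) : ℂ)
        - (l : ℂ) * (star a ⬝ᵥ ((C⁻¹ * Rh * C⁻¹) *ᵥ a))
            / ((1 + l * (star a ⬝ᵥ (C⁻¹ *ᵥ a)).re : ℝ) : ℂ) := by
  have hCu : IsUnit C.det := hC.det_pos.ne'.isUnit
  obtain ⟨α, hα, hαa : (α : ℂ) = _⟩ :=
    RCLike.pos_iff_exists_ofReal.mp (hC.inv.dotProduct_mulVec_pos ha)
  obtain ⟨d, hd, hdC : (d : ℂ) = _⟩ := RCLike.pos_iff_exists_ofReal.mp hC.det_pos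
  have hs : 0 < 1 + l * α := by positivity
  have hla : star a ⬝ᵥ C⁻¹ *ᵥ ((l : ℂ) • a) = ((l * α : ℝ) : ℂ) := by
    rw [mulVec_smul, dotProduct_smul, ← hαa]; push_cast; ring
  have hR' : R = C + vecMulVec ((l : ℂ) • a) (star a) := by rw [hR, smul_vecMulVec, add_comm]
  have hRpos : R.PosDef := hR ▸ PosDef.posSemidef_add
    ((posSemidef_vecMulVec_self_star a).smul (Complex.zero_le_real.mpr hl)) hC
  refine ⟨hRpos, ?_⟩
  have hdet : R.det = ((d * (1 + l * α) : ℝ) : ℂ) := by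
    rw [hR', det_add_vecMulVec hCu, hla, ← hdC]; push_cast; ring
  have htr := trace_inv_add_vecMulVec_mul hCu ((l : ℂ) • a) (star a)
    (by rw [hla]; exact_mod_cast hs.ne') Rh
  rw [← hR', hla, mulVec_smul, dotProduct_smul] at htr
  rw [hdet, htr, ← hdC, ← hαa]
  simp only [Complex.ofReal_re]
  rw [Real.log_mul hd.ne' hs.ne']
  push_cast
  ring
end

section
/- Let α > 0 and β be real numbers, and for λ > −1/α define f(λ) = log(1 + λα) − λβ/(1 + λα). Then f is differentiable with f′(λ) = (α + λα² − β)/(1 + λα)², and f′(λ) = 0 if and only if λ = (β − α)/α². In particular, for C a p×p Hermitian positive definite complex matrix, R̂ a p×p Hermitian complex matrix and a ∈ ℂ^p nonzero, with α = aᴴ C⁻¹ a and β = aᴴ C⁻¹ R̂ C⁻¹ a, the unique stationary point of the reduced single-source log-likelihood is λ̂ = aᴴ C⁻¹ (R̂ − C) C⁻¹ a / (aᴴ C⁻¹ a)². -/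
open Matrix
open scoped ComplexOrder

/-!
With `u = 1 + λα > 0`, the quotient rule gives `f′(λ) = α/u − β/u² = (α + λα² − β)/u²`.
The matrix part rests on `C⁻¹ (R̂ − C) C⁻¹ = C⁻¹ R̂ C⁻¹ − C⁻¹`, which makes the numerator
`aᴴ C⁻¹ (R̂ − C) C⁻¹ a` equal to `β − α`.
-/
theorem one_add_mul_pos_of_neg_inv_lt {α l : ℝ} (hα : 0 < α) (hl : -1 / α < l) :
    0 < 1 + l * α := by
  have h := mul_lt_mul_of_pos_right hl hα
  rw [div_mul_cancel₀ _ hα.ne'] at h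
  linarith

theorem hasDerivAt_log_one_add_mul_sub_mul_div {α β l : ℝ} (hl : 1 + l * α ≠ 0) :
    HasDerivAt (fun x : ℝ => Real.log (1 + x * α) - x * β / (1 + x * α))
      ((α + l * α ^ 2 - β) / (1 + l * α) ^ 2) l := by
  have hden : HasDerivAt (fun x : ℝ => 1 + x * α) α l := by
    simpa using ((hasDerivAt_id l).mul_const α).const_add 1
  have hnum : HasDerivAt (fun x : ℝ => x * β) β l := by
    simpa using (hasDerivAt_id l).mul_const β
  have hquot : HasDerivAt (fun x : ℝ => x * β / (1 + x * α))
      ((β * (1 + l * α) - l * β * α) / (1 + l * α) ^ 2) l := hnum.div hden hl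
  refine ((hden.log hl).sub hquot).congr_deriv ?_
  field_simp
  ring

theorem div_sq_one_add_mul_eq_zero_iff {α β l : ℝ} (hα : α ≠ 0) (hl : 1 + l * α ≠ 0) :
    (α + l * α ^ 2 - β) / (1 + l * α) ^ 2 = 0 ↔ l = (β - α) / α ^ 2 := by
  rw [div_eq_zero_iff, or_iff_left (pow_ne_zero 2 hl), eq_div_iff (pow_ne_zero 2 hα)]
  constructor <;> intro h <;> linarith

/-- Holds for every square matrix, since `A⁻¹ = 0` when `A` is singular. -/
theorem Matrix.nonsing_inv_mul_mul_nonsing_inv {n R : Type*} [Fintype n] [DecidableEq n]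
    [CommRing R] (A : Matrix n n R) : A⁻¹ * A * A⁻¹ = A⁻¹ := by
  by_cases h : IsUnit A.det
  · rw [nonsing_inv_mul A h, Matrix.one_mul]
  · rw [nonsing_inv_apply_not_isUnit A h, Matrix.zero_mul, Matrix.zero_mul]

theorem Matrix.nonsing_inv_mul_sub_mul_nonsing_inv {n R : Type*} [Fintype n] [DecidableEq n]
    [CommRing R] (A B : Matrix n n R) : A⁻¹ * (B - A) * A⁻¹ = A⁻¹ * B * A⁻¹ - A⁻¹ := by
  rw [Matrix.mul_sub, Matrix.sub_mul, nonsing_inv_mul_mul_nonsing_inv]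

/-- For `α > 0`, `β ∈ ℝ` and `λ > −1/α`, the function
`f(λ) = log(1 + λα) − λβ/(1 + λα)` has derivative `(α + λα² − β)/(1 + λα)²`, which
vanishes iff `λ = (β − α)/α²`. In particular, with `α = aᴴC⁻¹a`, `β = aᴴC⁻¹R̂C⁻¹a` for
Hermitian positive definite `C`, Hermitian `R̂` and `a ≠ 0`, the unique stationary point
is `λ̂ = aᴴ C⁻¹ (R̂ − C) C⁻¹ a / (aᴴ C⁻¹ a)²`. -/
theorem stmt14 (α β : ℝ) (hα : 0 < α) (l : ℝ) (hl : -1 / α < l) :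
    HasDerivAt (fun x : ℝ => Real.log (1 + x * α) - x * β / (1 + x * α))
      ((α + l * α ^ 2 - β) / (1 + l * α) ^ 2) l
    ∧ ((α + l * α ^ 2 - β) / (1 + l * α) ^ 2 = 0 ↔ l = (β - α) / α ^ 2)
    ∧ (∀ (p : ℕ) (C Rh : Matrix (Fin p) (Fin p) ℂ) (a : Fin p → ℂ),
        C.PosDef → Rh.IsHermitian → a ≠ 0 →
        α = (star a ⬝ᵥ (C⁻¹ *ᵥ a)).re →
        β = (star a ⬝ᵥ ((C⁻¹ * Rh * C⁻¹) *ᵥ a)).re →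
        (β - α) / α ^ 2
          = (star a ⬝ᵥ ((C⁻¹ * (Rh - C) * C⁻¹) *ᵥ a)).re
              / ((star a ⬝ᵥ (C⁻¹ *ᵥ a)).re) ^ 2) := by
  have hu : 1 + l * α ≠ 0 := (one_add_mul_pos_of_neg_inv_lt hα hl).ne'
  refine ⟨hasDerivAt_log_one_add_mul_sub_mul_div hu,
    div_sq_one_add_mul_eq_zero_iff hα.ne' hu, ?_⟩
  intro p C Rh a _ _ _ hαa hβa
  rw [nonsing_inv_mul_sub_mul_nonsing_inv, sub_mulVec, dotProduct_sub, Complex.sub_re,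
    ← hαa, ← hβa]
end
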